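/- arXiv:2501.09516 — 2 statements merged into one kernel-verified Lean document; each statement's English description precedes it below -/
import Mathlib

section
/- Let (r_k)_{k≥0} be a sequence of nonnegative real numbers, let m be a nonnegative integer, let ν ∈ (0,1), and let K be an index. If r_{k+1} ≤ ν · max_{max(k−m,0) ≤ j ≤ k} r_j for all k ≥ K, then there exist μ > 0 and τ ∈ (0,1) such that r_k ≤ μ τ^{k−K} · max_{max(K−m,0) ≤ j ≤ K} r_j for all k ≥ K. -/
/-!
Write `W k` for the maximum of `r` over the window `[k - m, k]`. Every `r j` with `j > K` is
at most `ν` times the previous window maximum, so by strong induction the window maxima are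
bounded by `ν ^ ⌊(k - K) / (m + 1)⌋ * W K`: the factor `ν` is gained at least once every
`m + 1` steps. With `τ = ν ^ (1 / (m + 1))` this floor-exponent bound is at most
`ν⁻¹ * τ ^ (k - K) * W K`.
-/

open Finset

section WindowMax

variable {α : Type*} [LinearOrder α]

def windowMax (r : ℕ → α) (m k : ℕ) : α :=
  (Icc (k - m) k).sup' (nonempty_Icc.mpr (Nat.sub_le k m)) r

theorem le_windowMax (r : ℕ → α) {m j k : ℕ} (hkj : k - m ≤ j) (hjk : j ≤ k) :
    r j ≤ windowMax r m k :=
  le_sup' r (mem_Icc.mpr ⟨hkj, hjk⟩)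

theorem windowMax_le_pow_div_mul [CommSemiring α] [IsOrderedRing α] {r : ℕ → α} {m K : ℕ} {ν : α} (hν0 : 0 ≤ ν) (hν1 : ν ≤ 1)
    (hW : 0 ≤ windowMax r m K) (hrec : ∀ k, K ≤ k → r (k + 1) ≤ ν * windowMax r m k) :
    ∀ k, K ≤ k → windowMax r m k ≤ ν ^ ((k - K) / (m + 1)) * windowMax r m K := by
  intro k
  induction k using Nat.strong_induction_on with
  | _ k ih =>
    intro hKk
    refine sup'_le _ _ fun j hj => ?_
    obtain ⟨hkj, hjk⟩ := mem_Icc.mp hj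
    rcases le_or_gt j K with hjK | hKj
    · have hexp : (k - K) / (m + 1) = 0 := Nat.div_eq_of_lt (by omega)
      rw [hexp, pow_zero, one_mul]
      exact le_windowMax r (by omega) hjK
    · obtain ⟨i, rfl⟩ : ∃ i, j = i + 1 := ⟨j - 1, by omega⟩
      calc r (i + 1) ≤ ν * windowMax r m i := hrec i (by omega)
        _ ≤ ν * (ν ^ ((i - K) / (m + 1)) * windowMax r m K) :=
            mul_le_mul_of_nonneg_left (ih i (by omega) (by omega)) hν0
        _ = ν ^ ((i - K) / (m + 1) + 1) * windowMax r m K := by ring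
        _ ≤ ν ^ ((k - K) / (m + 1)) * windowMax r m K := by
            refine mul_le_mul_of_nonneg_right (pow_le_pow_of_le_one hν0 hν1 ?_) hW
            calc (k - K) / (m + 1) ≤ ((i - K) + (m + 1)) / (m + 1) :=
                  Nat.div_le_div_right (by omega)
              _ = (i - K) / (m + 1) + 1 := Nat.add_div_right _ m.succ_pos

end WindowMax

theorem pow_div_le_inv_mul_pow {ν τ : ℝ} {n : ℕ} (hν : 0 < ν) (hτ0 : 0 ≤ τ) (hτ1 : τ ≤ 1)
    (hn : 0 < n) (hτν : τ ^ n = ν) (i : ℕ) : ν ^ (i / n) ≤ ν⁻¹ * τ ^ i := by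
  have hi : i ≤ n * (i / n + 1) := by
    have := Nat.lt_div_mul_add (a := i) hn
    rw [mul_comm]; linarith
  calc ν ^ (i / n) = ν⁻¹ * (τ ^ n) ^ (i / n + 1) := by
        rw [hτν, pow_succ', inv_mul_cancel_left₀ hν.ne']
    _ = ν⁻¹ * τ ^ (n * (i / n + 1)) := by rw [pow_mul]
    _ ≤ ν⁻¹ * τ ^ i :=
        mul_le_mul_of_nonneg_left (pow_le_pow_of_le_one hτ0 hτ1 hi) (inv_nonneg.mpr hν.le)

theorem exists_pow_eq_of_mem_Ioo {ν : ℝ} (hν : ν ∈ Set.Ioo (0 : ℝ) 1) {n : ℕ} (hn : n ≠ 0) :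
    ∃ τ ∈ Set.Ioo (0 : ℝ) 1, τ ^ n = ν :=
  ⟨ν ^ (n⁻¹ : ℝ),
    ⟨Real.rpow_pos_of_pos hν.1 _, Real.rpow_lt_one hν.1.le hν.2 (by positivity)⟩,
    Real.rpow_inv_natCast_pow hν.1.le hn⟩

theorem stmt15 (r : ℕ → ℝ) (hr : ∀ k, 0 ≤ r k) (m : ℕ)
    (ν : ℝ) (hν : ν ∈ Set.Ioo (0 : ℝ) 1) (K : ℕ)
    -- nonmonotone (GLL-type) recursion from index `K` on
    (hrec : ∀ k, K ≤ k →
      r (k + 1) ≤ ν * (Finset.Icc (k - m) k).sup'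
        (Finset.nonempty_Icc.mpr (Nat.sub_le k m)) r) :
    -- R-linear convergence of `(r_k)`
    ∃ μ τ : ℝ, 0 < μ ∧ τ ∈ Set.Ioo (0 : ℝ) 1 ∧
      ∀ k, K ≤ k →
        r k ≤ μ * τ ^ (k - K) *
          (Finset.Icc (K - m) K).sup' (Finset.nonempty_Icc.mpr (Nat.sub_le K m)) r := by
  obtain ⟨τ, hτ, hτν⟩ := exists_pow_eq_of_mem_Ioo hν m.succ_ne_zero
  have hW : 0 ≤ windowMax r m K := (hr K).trans (le_windowMax r (Nat.sub_le K m) le_rfl)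
  have hdecay := windowMax_le_pow_div_mul hν.1.le hν.2.le hW hrec
  refine ⟨ν⁻¹, τ, inv_pos.mpr hν.1, hτ, fun k hKk => ?_⟩
  calc r k ≤ windowMax r m k := le_windowMax r (Nat.sub_le k m) le_rfl
    _ ≤ ν ^ ((k - K) / (m + 1)) * windowMax r m K := hdecay k hKk
    _ ≤ ν⁻¹ * τ ^ (k - K) * windowMax r m K :=
        mul_le_mul_of_nonneg_right
          (pow_div_le_inv_mul_pow hν.1 hτ.1.le hτ.2.le m.succ_pos hτν _) hW
end

section
/- Let X ∈ St(n,r), X* ∈ ℝ^{n×r}, W ∈ T_X, let f : ℝ^{n×r} → ℝ be differentiable at X, let h : ℝ^{n×r} → ℝ be convex and L_h-Lipschitz, set F := f + h, and let B : ℝ^{n×r} → ℝ^{n×r} be self-adjoint for the trace inner product, map T_X into itself, and satisfy ⟨V,BV⟩ ≤ κ₂‖V‖² for all V ∈ T_X. Define φ(V) := ⟨∇f(X),V⟩ + (1/2)⟨V,BV⟩ + h(X+V). If f(X*) − f(X) ≥ ⟨∇f(X), W⟩ and ‖X* − X − W‖ ≤ M₂‖W‖² for some M₂ > 0, then for every θ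 ∈ [0,1]: f(X) + φ(θW) ≤ θ F(X*) + (1−θ) F(X) + ((1/2)θ²κ₂ + θ L_h M₂)‖W‖². In particular, f(X) + inf_{V ∈ T_X} φ(V) is bounded above by the right-hand side for every θ ∈ [0,1]. -/
/-!
Along the segment `θ ↦ θ • W` the three parts of `φ` are bounded separately: the linear term
by the descent inequality `⟨∇f(X), W⟩ ≤ f(X*) - f(X)`, the quadratic term by the curvature
bound on `T_X`, and `h(X + θW)` by comparing `X + θW` with the convex combination
`θ X* + (1 - θ) X`, from which it differs by `θ (X* - X - W)`, of norm at most `θ M₂ ‖W‖²`.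
-/

open Matrix

/-- The trace inner product `⟨A, B⟩ = tr(AᵀB)` on `ℝ^{n×r}`. -/
noncomputable def tinner {n r : ℕ} (A B : Matrix (Fin n) (Fin r) ℝ) : ℝ := (Aᵀ * B).trace

/-- `V` belongs to the tangent space `T_X = {V : VᵀX + XᵀV = 0}` of the Stiefel manifold at `X`. -/
def IsTangent {n r : ℕ} (X V : Matrix (Fin n) (Fin r) ℝ) : Prop := Vᵀ * X + Xᵀ * V = 0

-- The norm `‖·‖` below is the Frobenius norm, associated to the trace inner product.
attribute [local instance] Matrix.frobeniusNormedAddCommGroup Matrix.frobeniusNormedSpace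

section Lipschitz

variable {E : Type*} [SeminormedAddCommGroup E] {h : E → ℝ} {L : ℝ}

theorem norm_eq_zero_of_abs_sub_le_mul_norm (hL : ∀ A B, |h A - h B| ≤ L * ‖A - B‖)
    (hneg : L < 0) (x : E) : ‖x‖ = 0 := by
  have := (abs_nonneg _).trans (hL x 0)
  rw [sub_zero] at this
  nlinarith [norm_nonneg x]

theorem mul_norm_le_of_abs_sub_le_mul_norm (hL : ∀ A B, |h A - h B| ≤ L * ‖A - B‖)
    {M : ℝ} {x w : E} (hx : ‖x‖ ≤ M * ‖w‖ ^ 2) : L * ‖x‖ ≤ L * M * ‖w‖ ^ 2 := by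
  rcases le_or_gt 0 L with hL0 | hneg
  · rw [mul_assoc]
    exact mul_le_mul_of_nonneg_left hx hL0
  · simp [norm_eq_zero_of_abs_sub_le_mul_norm hL hneg]

theorem ConvexOn.add_smul_le_of_abs_sub_le_mul_norm [NormedSpace ℝ E]
    (hconv : ConvexOn ℝ Set.univ h) (hL : ∀ A B, |h A - h B| ≤ L * ‖A - B‖) (x y w : E) {θ : ℝ}
    (hθ : θ ∈ Set.Icc (0 : ℝ) 1) :
    h (x + θ • w) ≤ θ * h y + (1 - θ) * h x + θ * (L * ‖y - x - w‖) := by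
  obtain ⟨hθ0, hθ1⟩ := hθ
  have hcombo : h (θ • y + (1 - θ) • x) ≤ θ * h y + (1 - θ) * h x :=
    hconv.2 (Set.mem_univ y) (Set.mem_univ x) hθ0 (sub_nonneg.2 hθ1) (add_sub_cancel θ 1)
  have hdist : ‖x + θ • w - (θ • y + (1 - θ) • x)‖ = θ * ‖y - x - w‖ := by
    rw [show x + θ • w - (θ • y + (1 - θ) • x) = (-θ) • (y - x - w) by module,
      norm_smul, Real.norm_eq_abs, abs_neg, abs_of_nonneg hθ0]
  have hlip := (abs_le.1 (hL (x + θ • w) (θ • y + (1 - θ) • x))).2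
  rw [hdist] at hlip
  linarith

end Lipschitz

section Stiefel

variable {n r : ℕ}

theorem tinner_smul_left (c : ℝ) (A B : Matrix (Fin n) (Fin r) ℝ) :
    tinner (c • A) B = c * tinner A B := by
  simp [tinner, Matrix.smul_mul, Matrix.trace_smul]

theorem tinner_smul_right (c : ℝ) (A B : Matrix (Fin n) (Fin r) ℝ) :
    tinner A (c • B) = c * tinner A B := by
  simp [tinner, Matrix.mul_smul, Matrix.trace_smul]

theorem IsTangent.smul {X V : Matrix (Fin n) (Fin r) ℝ} (hV : IsTangent X V) (c : ℝ) :
    IsTangent X (c • V) := by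
  unfold IsTangent at hV ⊢
  rw [Matrix.transpose_smul, Matrix.smul_mul, Matrix.mul_smul, ← smul_add, hV, smul_zero]

theorem tinner_smul_map_smul (B : Matrix (Fin n) (Fin r) ℝ →ₗ[ℝ] Matrix (Fin n) (Fin r) ℝ)
    (θ : ℝ) (W : Matrix (Fin n) (Fin r) ℝ) :
    tinner (θ • W) (B (θ • W)) = θ ^ 2 * tinner W (B W) := by
  rw [map_smul, tinner_smul_left, tinner_smul_right]
  ring

end Stiefel

theorem stmt16_general {n r : ℕ} (X : Matrix (Fin n) (Fin r) ℝ)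
    (Xs W : Matrix (Fin n) (Fin r) ℝ) (hW : IsTangent X W)
    (f h : Matrix (Fin n) (Fin r) ℝ → ℝ)
    -- `f` is differentiable at `X` with (Euclidean) gradient `G = ∇f(X)`
    (G : Matrix (Fin n) (Fin r) ℝ)
    -- `h` is convex and `L_h`-Lipschitz
    (Lh : ℝ) (hconv : ConvexOn ℝ Set.univ h)
    (hLiph : ∀ A B, |h A - h B| ≤ Lh * ‖A - B‖)
    -- `B` is linear, self-adjoint for the trace inner product, maps `T_X` into itself,
    -- and satisfies `⟨V,BV⟩ ≤ κ₂‖V‖²` on `T_X`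
    (κ₂ : ℝ)
    (B : Matrix (Fin n) (Fin r) ℝ →ₗ[ℝ] Matrix (Fin n) (Fin r) ℝ)
    (hBup : ∀ V, IsTangent X V → tinner V (B V) ≤ κ₂ * ‖V‖ ^ 2)
    -- the objective `φ(V) = ⟨∇f(X),V⟩ + (1/2)⟨V,BV⟩ + h(X+V)`
    (φ : Matrix (Fin n) (Fin r) ℝ → ℝ)
    (hφ : ∀ V, φ V = tinner G V + (1 / 2) * tinner V (B V) + h (X + V))
    (M₂ : ℝ)
    (h1 : tinner G W ≤ f Xs - f X)
    (h2 : ‖Xs - X - W‖ ≤ M₂ * ‖W‖ ^ 2) :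
    (∀ θ : ℝ, θ ∈ Set.Icc (0 : ℝ) 1 →
      f X + φ (θ • W) ≤
        θ * (f Xs + h Xs) + (1 - θ) * (f X + h X) +
          ((1 / 2) * θ ^ 2 * κ₂ + θ * Lh * M₂) * ‖W‖ ^ 2) ∧
    -- in particular, `f(X) + inf_{V ∈ T_X} φ(V)` is bounded above by the same right-hand side
    (∀ θ : ℝ, θ ∈ Set.Icc (0 : ℝ) 1 →
      ∃ V, IsTangent X V ∧
        f X + φ V ≤
          θ * (f Xs + h Xs) + (1 - θ) * (f X + h X) +
            ((1 / 2) * θ ^ 2 * κ₂ + θ * Lh * M₂) * ‖W‖ ^ 2) := by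
  have along_W : ∀ θ : ℝ, θ ∈ Set.Icc (0 : ℝ) 1 →
      f X + φ (θ • W) ≤
        θ * (f Xs + h Xs) + (1 - θ) * (f X + h X) +
          ((1 / 2) * θ ^ 2 * κ₂ + θ * Lh * M₂) * ‖W‖ ^ 2 := by
    intro θ hθ
    have hθ0 : 0 ≤ θ := hθ.1
    have hlin := mul_le_mul_of_nonneg_left h1 hθ0
    have hquad := mul_le_mul_of_nonneg_left (hBup W hW) (sq_nonneg θ)
    have hnonsmooth := hconv.add_smul_le_of_abs_sub_le_mul_norm hLiph X Xs W hθ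
    have hdefect := mul_le_mul_of_nonneg_left
      (mul_norm_le_of_abs_sub_le_mul_norm hLiph h2) hθ0
    rw [hφ, tinner_smul_right, tinner_smul_map_smul]
    linarith
  exact ⟨along_W, fun θ hθ => ⟨θ • W, hW.smul θ, along_W θ hθ⟩⟩

theorem stmt16 {n r : ℕ} (X : Matrix (Fin n) (Fin r) ℝ) (hX : Xᵀ * X = 1)
    (Xs W : Matrix (Fin n) (Fin r) ℝ) (hW : IsTangent X W)
    (f h : Matrix (Fin n) (Fin r) ℝ → ℝ)
    -- `f` is differentiable at `X` with (Euclidean) gradient `G = ∇f(X)`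
    (G : Matrix (Fin n) (Fin r) ℝ) (Lf : Matrix (Fin n) (Fin r) ℝ →L[ℝ] ℝ)
    (hf : HasFDerivAt f Lf X) (hGrad : ∀ V, Lf V = tinner G V)
    -- `h` is convex and `L_h`-Lipschitz
    (Lh : ℝ) (hconv : ConvexOn ℝ Set.univ h)
    (hLiph : ∀ A B, |h A - h B| ≤ Lh * ‖A - B‖)
    -- `B` is linear, self-adjoint for the trace inner product, maps `T_X` into itself,
    -- and satisfies `⟨V,BV⟩ ≤ κ₂‖V‖²` on `T_X`
    (κ₂ : ℝ)
    (B : Matrix (Fin n) (Fin r) ℝ →ₗ[ℝ] Matrix (Fin n) (Fin r) ℝ)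
    (hBsa : ∀ U V, tinner U (B V) = tinner (B U) V)
    (hBtan : ∀ V, IsTangent X V → IsTangent X (B V))
    (hBup : ∀ V, IsTangent X V → tinner V (B V) ≤ κ₂ * ‖V‖ ^ 2)
    -- the objective `φ(V) = ⟨∇f(X),V⟩ + (1/2)⟨V,BV⟩ + h(X+V)`
    (φ : Matrix (Fin n) (Fin r) ℝ → ℝ)
    (hφ : ∀ V, φ V = tinner G V + (1 / 2) * tinner V (B V) + h (X + V))
    (M₂ : ℝ) (hM₂ : 0 < M₂)
    (h1 : tinner G W ≤ f Xs - f X)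
    (h2 : ‖Xs - X - W‖ ≤ M₂ * ‖W‖ ^ 2) :
    (∀ θ : ℝ, θ ∈ Set.Icc (0 : ℝ) 1 →
      f X + φ (θ • W) ≤
        θ * (f Xs + h Xs) + (1 - θ) * (f X + h X) +
          ((1 / 2) * θ ^ 2 * κ₂ + θ * Lh * M₂) * ‖W‖ ^ 2) ∧
    -- in particular, `f(X) + inf_{V ∈ T_X} φ(V)` is bounded above by the same right-hand side
    (∀ θ : ℝ, θ ∈ Set.Icc (0 : ℝ) 1 →
      ∃ V, IsTangent X V ∧
        f X + φ V ≤
          θ * (f Xs + h Xs) + (1 - θ) * (f X + h X) +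
            ((1 / 2) * θ ^ 2 * κ₂ + θ * Lh * M₂) * ‖W‖ ^ 2) :=
  stmt16_general X Xs W hW f h G Lh hconv hLiph κ₂ B hBup φ hφ M₂ h1 h2
end
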